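/- Let p be a prime and n ≥ 2. Write d with 0 ≤ d ≤ pn−2 as d = pq + r with 0 ≤ r ≤ p−1. By Lucas' theorem type reasoning, (−1)^d C(pn−2, d) mod p can be computed from the base-p digits of pn−2 and d, and it agrees modulo p with Σ_{(a,b,c): pa+b+c=d, 0≤a≤n−2, 0≤b,c≤p−1} (−1)^a C(n−2, a). -/

import Mathlib

/-!
Both sides are coefficients of `X ^ d`. Modulo `p`, Frobenius gives
`(1 - X) ^ (p * n) = (1 - X ^ p) ^ n`, and `1 - X ^ p = (1 - X) * (1 + X + ⋯ + X ^ (p - 1))`;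
cancelling `(1 - X) ^ 2` leaves
`(1 - X) ^ (p * n - 2) = (1 - X ^ p) ^ (n - 2) * (1 + X + ⋯ + X ^ (p - 1)) ^ 2` in `𝔽_p[X]`.
The coefficient of `X ^ d` on the left is `(-1) ^ d * C(p * n - 2, d)`, on the right it is the
sum over `p * a + b + c = d`.
-/

open Finset Polynomial

section

variable {R : Type*} [CommRing R]

theorem Polynomial.one_sub_X_pow_pow_eq_sum (e k : ℕ) :
    (1 - X ^ e : R[X]) ^ k = ∑ a ∈ range (k + 1), C ((-1) ^ a * (k.choose a : R)) * X ^ (e * a) := by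
  rw [sub_eq_neg_add, add_pow]
  refine sum_congr rfl fun a _ => ?_
  rw [neg_pow, one_pow, mul_one, C_mul, C_pow, C_neg, C_1, map_natCast, pow_mul]
  ring

theorem Polynomial.coeff_one_sub_X_pow (m d : ℕ) :
    ((1 - X : R[X]) ^ m).coeff d = (-1) ^ d * m.choose d := by
  rw [← pow_one X, one_sub_X_pow_pow_eq_sum, finsetSum_coeff]
  simp only [one_mul, coeff_C_mul_X_pow, sum_ite_eq, mem_range]
  split_ifs with hd
  · rfl
  · rw [Nat.choose_eq_zero_of_lt (by omega), Nat.cast_zero, mul_zero]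

theorem Polynomial.coeff_one_sub_X_pow_pow_mul_geom_sum_sq (e k d : ℕ) :
    ((1 - X ^ e) ^ k * (∑ i ∈ range e, X ^ i) ^ 2 : R[X]).coeff d =
      ∑ t ∈ (range (k + 1) ×ˢ range e ×ˢ range e).filter (fun t => e * t.1 + t.2.1 + t.2.2 = d),
        (-1) ^ t.1 * (k.choose t.1 : R) := by
  rw [one_sub_X_pow_pow_eq_sum, sq, sum_mul_sum, sum_mul_sum, sum_filter, sum_product]
  simp_rw [mul_sum, sum_product, finsetSum_coeff]
  refine sum_congr rfl fun a _ => sum_congr rfl fun b _ => sum_congr rfl fun c _ => ?_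
  rw [mul_assoc, ← pow_add, ← pow_add, coeff_C_mul_X_pow, ← add_assoc]
  exact if_congr eq_comm rfl rfl

theorem Polynomial.one_sub_X_pow_char_mul_sub_two_eq [IsDomain R] {p : ℕ} [Fact p.Prime] [CharP R p]
    {n : ℕ} (hn : 2 ≤ n) :
    (1 - X : R[X]) ^ (p * n - 2) = (1 - X ^ p) ^ (n - 2) * (∑ i ∈ range p, X ^ i) ^ 2 := by
  have hp := (Fact.out : p.Prime).two_le
  have h1X : (1 - X : R[X]) ≠ 0 := by
    rw [← neg_sub, neg_ne_zero, ← C_1]; exact X_sub_C_ne_zero 1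
  refine mul_right_cancel₀ (pow_ne_zero 2 h1X) ?_
  calc (1 - X : R[X]) ^ (p * n - 2) * (1 - X) ^ 2 = ((1 - X) ^ p) ^ n := by
        rw [← pow_add, ← pow_mul, Nat.sub_add_cancel (by nlinarith)]
    _ = (1 - X ^ p) ^ (n - 2) * (1 - X ^ p) ^ 2 := by
        rw [sub_pow_char, one_pow, ← pow_add, Nat.sub_add_cancel hn]
    _ = _ := by rw [← mul_neg_geom_sum]; ring

end

theorem elliptic_surface_congruence_via_lucas_general (p n d : ℕ) (hp : p.Prime) (hn : 2 ≤ n) :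
    Int.ModEq (p : ℤ)
      ((-1 : ℤ) ^ d * ((p * n - 2).choose d : ℤ))
      (∑ t ∈ ((Finset.range (n - 1)) ×ˢ (Finset.range p) ×ˢ (Finset.range p)).filter
          (fun t => p * t.1 + t.2.1 + t.2.2 = d),
        (-1 : ℤ) ^ t.1 * ((n - 2).choose t.1 : ℤ)) := by
  have := Fact.mk hp
  rw [← ZMod.intCast_eq_intCast_iff]
  push_cast
  have h := congrArg (coeff · d) (one_sub_X_pow_char_mul_sub_two_eq (R := ZMod p) hn)
  simp only [coeff_one_sub_X_pow, coeff_one_sub_X_pow_pow_mul_geom_sum_sq] at h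
  rwa [show n - 2 + 1 = n - 1 by omega] at h

/-- Writing `d = pq + r` with `0 ≤ r ≤ p−1`, the quantity `(−1)^d C(pn−2, d)` is,
modulo `p` (by Lucas-type reasoning on base-`p` digits), equal to
`Σ (−1)^a C(n−2, a)` summed over triples `(a,b,c)` with `0 ≤ a ≤ n−2`,
`0 ≤ b,c ≤ p−1` and `pa+b+c = d`. -/
theorem elliptic_surface_congruence_via_lucas (p n d q r : ℕ) (hp : p.Prime) (hn : 2 ≤ n)
    (hd : d ≤ p * n - 2) (hqr : d = p * q + r) (hr : r ≤ p - 1) :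
    Int.ModEq (p : ℤ)
      ((-1 : ℤ) ^ d * ((p * n - 2).choose d : ℤ))
      (∑ t ∈ ((Finset.range (n - 1)) ×ˢ (Finset.range p) ×ˢ (Finset.range p)).filter
          (fun t => p * t.1 + t.2.1 + t.2.2 = d),
        (-1 : ℤ) ^ t.1 * ((n - 2).choose t.1 : ℤ)) :=
  elliptic_surface_congruence_via_lucas_general p n d hp hn
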